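/- If λ₁, λ₂ ∈ ℝᴺ are such that λ₁ − λ₂ lies in the column space of Z, then ‖∇g(λ₁) − ∇g(λ₂)‖ ≥ (σ/𝓛) ‖λ₁ − λ₂‖. -/

import Mathlib

open Matrix Set
open scoped RealInnerProductSpace

noncomputable section

open InnerProductSpace

/-- The positive semidefinite square root, with the definition it had in the older Mathlib
(`Matrix.PosSemidef.sqrt`, since removed). -/
def Matrix.PosSemidef.sqrt {n 𝕜 : Type*} [Fintype n] [DecidableEq n] [RCLike 𝕜]
    [PartialOrder 𝕜] [StarOrderedRing 𝕜]
    {A : Matrix n n 𝕜} (hA : A.PosSemidef) : Matrix n n 𝕜 :=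
  hA.1.eigenvectorUnitary.1 * diagonal ((↑) ∘ (√·) ∘ hA.1.eigenvalues) *
    (star hA.1.eigenvectorUnitary : Matrix n n 𝕜)

lemma sqrtPSD_isHermitian {N : ℕ} {Z : Matrix (Fin N) (Fin N) ℝ} (hZ : Z.PosSemidef) :
    hZ.sqrt.IsHermitian := by
  unfold Matrix.PosSemidef.sqrt
  simp [IsHermitian, Matrix.mul_assoc, Matrix.star_eq_conjTranspose]

lemma sqrtPSD_mul_self {N : ℕ} {Z : Matrix (Fin N) (Fin N) ℝ} (hZ : Z.PosSemidef) :
    hZ.sqrt * hZ.sqrt = Z := by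
  unfold Matrix.PosSemidef.sqrt
  have hU : (star hZ.1.eigenvectorUnitary : Matrix (Fin N) (Fin N) ℝ) *
      (hZ.1.eigenvectorUnitary : Matrix (Fin N) (Fin N) ℝ) = 1 := Unitary.coe_star_mul_self _
  have hD : diagonal (RCLike.ofReal ∘ (√·) ∘ hZ.1.eigenvalues : Fin N → ℝ) *
      diagonal (RCLike.ofReal ∘ (√·) ∘ hZ.1.eigenvalues : Fin N → ℝ)
      = diagonal (RCLike.ofReal ∘ hZ.1.eigenvalues : Fin N → ℝ) := by
    rw [diagonal_mul_diagonal]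
    congr 1
    funext i
    simp [Real.mul_self_sqrt (hZ.eigenvalues_nonneg i)]
  conv_rhs => rw [hZ.1.spectral_theorem, Unitary.conjStarAlgAut_apply]
  calc _ = (hZ.1.eigenvectorUnitary : Matrix (Fin N) (Fin N) ℝ) *
        (diagonal (RCLike.ofReal ∘ (√·) ∘ hZ.1.eigenvalues : Fin N → ℝ) *
        ((star hZ.1.eigenvectorUnitary : Matrix (Fin N) (Fin N) ℝ) *
          (hZ.1.eigenvectorUnitary : Matrix (Fin N) (Fin N) ℝ)) *
        diagonal (RCLike.ofReal ∘ (√·) ∘ hZ.1.eigenvalues : Fin N → ℝ)) *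
        (star hZ.1.eigenvectorUnitary : Matrix (Fin N) (Fin N) ℝ) := by
          simp only [Matrix.mul_assoc]
    _ = _ := by rw [hU, Matrix.mul_one, hD]

/-- The augmented Lagrangian `L̃_α(x, λ) = f(x) + ⟨λ, Z^{1/2} x⟩ + (α/2) xᵀ Z x`,
where `Z^{1/2}` is the positive semidefinite square root of `Z`. -/
def augLag (N : ℕ) (f : EuclideanSpace ℝ (Fin N) → ℝ) (α : ℝ)
    (Z : Matrix (Fin N) (Fin N) ℝ) (hZ : Z.PosSemidef)
    (x lam : EuclideanSpace ℝ (Fin N)) : ℝ :=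
  f x + ⟪lam, Matrix.toEuclideanLin hZ.sqrt x⟫ +
    α / 2 * ⟪x, Matrix.toEuclideanLin Z x⟫

variable {E : Type*} [NormedAddCommGroup E] [InnerProductSpace ℝ E] [CompleteSpace E]

lemma hasGradientAt_inner_const (a x : E) :
    HasGradientAt (fun y : E => ⟪a, y⟫) a x :=
  hasGradientAt_iff_hasFDerivAt.2 (by exact (toDual ℝ E a).hasFDerivAt (x := x))

lemma HasGradientAt.add' {f g : E → ℝ} {f' g' : E} {x : E}
    (hf : HasGradientAt f f' x) (hg : HasGradientAt g g' x) :
    HasGradientAt (fun y => f y + g y) (f' + g') x := by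
  rw [hasGradientAt_iff_hasFDerivAt] at *
  simpa [map_add] using hf.fun_add hg

lemma hasGradientAt_quadratic [FiniteDimensional ℝ E] (T : E →ₗ[ℝ] E) (hT : T.IsSymmetric) (c : ℝ) (x : E) :
    HasGradientAt (fun y => c * ⟪y, T y⟫) ((2 * c) • T x) x := by
  have hT' : HasFDerivAt (fun y : E => T y) T.toContinuousLinearMap x :=
    T.toContinuousLinearMap.hasFDerivAt
  have h0 := ((hasFDerivAt_id x).inner ℝ hT').const_mul c
  rw [hasGradientAt_iff_hasFDerivAt]
  refine h0.congr_fderiv ?_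
  refine ContinuousLinearMap.ext fun v => ?_
  have h1 : ⟪x, T v⟫ = ⟪T x, v⟫ := (hT x v).symm
  simp [fderivInnerCLM_apply, real_inner_smul_left, h1, real_inner_comm]
  ring

lemma convex_grad_ineq {h : E → ℝ} (hconv : ConvexOn ℝ univ h)
    {G x : E} (hG : HasGradientAt h G x) (y : E) :
    h x + ⟪G, y - x⟫ ≤ h y := by
  have hc : HasDerivAt (fun t : ℝ => x + t • (y - x)) (y - x) 0 := by
    simpa using ((hasDerivAt_id (0:ℝ)).smul_const (y - x)).const_add x
  have hG' : HasFDerivAt h (toDual ℝ E G) (x + (0:ℝ) • (y - x)) := by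
    simpa using hasGradientAt_iff_hasFDerivAt.1 hG
  have hψ : HasDerivAt (fun t : ℝ => h (x + t • (y - x))) ⟪G, y - x⟫ 0 := by
    simpa [Function.comp_def] using hG'.comp_hasDerivAt 0 hc
  have hψconv : ConvexOn ℝ univ (fun t : ℝ => h (x + t • (y - x))) := by
    have h2 := hconv.comp_affineMap (AffineMap.lineMap x y)
    have h3 : (AffineMap.lineMap x y : ℝ →ᵃ[ℝ] E) ⁻¹' univ = univ := by simp
    rw [h3] at h2
    have e : (fun t : ℝ => h (x + t • (y - x))) = h ∘ AffineMap.lineMap x y := by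
      funext t
      simp [AffineMap.lineMap_apply]
      abel_nf
    rw [e]; exact h2
  have := hψconv.le_slope_of_hasDerivAt (mem_univ (0:ℝ)) (mem_univ (1:ℝ)) one_pos hψ
  rw [slope_def_field] at this
  simp only [zero_smul, add_zero, one_smul] at this hψ
  have h4 : x + (y - x) = y := by abel
  rw [h4] at this
  norm_num at this
  linarith

lemma descent_lemma {h : E → ℝ} {G : E → E} {K : ℝ} (hK : 0 < K)
    (hG : ∀ x, HasGradientAt h (G x) x)
    (hlipG : ∀ x y, ‖G x - G y‖ ≤ K * ‖x - y‖) (x y : E) :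
    h y ≤ h x + ⟪G x, y - x⟫ + K / 2 * ‖y - x‖ ^ 2 := by
  set c : ℝ → E := fun t => x + t • (y - x) with hcdef
  have hline : ∀ t : ℝ, HasDerivAt c (y - x) t := fun t => by
    simpa [hcdef] using ((hasDerivAt_id t).smul_const (y - x)).const_add x
  have hψ : ∀ t : ℝ, HasDerivAt (fun s : ℝ => h (c s)) ⟪G (c t), y - x⟫ t := by
    intro t
    simpa [Function.comp_def] using (hasGradientAt_iff_hasFDerivAt.1 (hG (c t))).comp_hasDerivAt t (hline t)
  have hGcont : Continuous G := by
    have : LipschitzWith K.toNNReal G := by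
      apply LipschitzWith.of_dist_le_mul
      intro a b
      rw [dist_eq_norm, dist_eq_norm, Real.coe_toNNReal _ hK.le]
      exact hlipG a b
    exact this.continuous
  have hccont : Continuous c := by
    exact continuous_const.add (continuous_id.smul continuous_const)
  have hcont : Continuous fun t : ℝ => ⟪G (c t), y - x⟫ :=
    (hGcont.comp hccont).inner continuous_const
  have hint : ∫ t in (0:ℝ)..1, ⟪G (c t), y - x⟫ = h (c 1) - h (c 0) :=
    intervalIntegral.integral_eq_sub_of_hasDerivAt (fun t _ => hψ t)
      (hcont.intervalIntegrable 0 1)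
  have hintle : ∫ t in (0:ℝ)..1, ⟪G (c t), y - x⟫ ≤
      ∫ t in (0:ℝ)..1, (⟪G x, y - x⟫ + K * t * ‖y - x‖ ^ 2) := by
    apply intervalIntegral.integral_mono_on (by norm_num) (hcont.intervalIntegrable 0 1)
      (Continuous.intervalIntegrable (by continuity) 0 1)
    · intro t ht
      rw [Set.mem_Icc] at ht
      have h1 : ⟪G (c t) - G x, y - x⟫ ≤ K * t * ‖y - x‖ ^ 2 := by
        calc ⟪G (c t) - G x, y - x⟫ ≤ ‖G (c t) - G x‖ * ‖y - x‖ := real_inner_le_norm _ _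
          _ ≤ (K * ‖c t - x‖) * ‖y - x‖ :=
              mul_le_mul_of_nonneg_right (hlipG _ _) (norm_nonneg _)
          _ = K * t * ‖y - x‖ ^ 2 := by
              have : c t - x = t • (y - x) := by simp [hcdef]
              rw [this, norm_smul, Real.norm_eq_abs, abs_of_nonneg ht.1]
              ring
      have h2 : ⟪G (c t), y - x⟫ - ⟪G x, y - x⟫ = ⟪G (c t) - G x, y - x⟫ := by
        rw [inner_sub_left]
      linarith
  have hval : ∫ t in (0:ℝ)..1, (⟪G x, y - x⟫ + K * t * ‖y - x‖ ^ 2) =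
      ⟪G x, y - x⟫ + K / 2 * ‖y - x‖ ^ 2 := by
    have h1 : ∀ t : ℝ, ⟪G x, y - x⟫ + K * t * ‖y - x‖ ^ 2
        = ⟪G x, y - x⟫ + (K * ‖y - x‖ ^ 2) * t := fun t => by ring
    simp only [h1]
    rw [intervalIntegral.integral_add (intervalIntegrable_const)
      (Continuous.intervalIntegrable (by continuity) 0 1),
      intervalIntegral.integral_const_mul, integral_id, intervalIntegral.integral_const]
    simp
    ring
  have hc1 : c 1 = y := by simp [hcdef]
  have hc0 : c 0 = x := by simp [hcdef]
  rw [hc1, hc0] at hint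
  linarith

lemma HasGradientAt.sub' {f g : E → ℝ} {f' g' : E} {x : E}
    (hf : HasGradientAt f f' x) (hg : HasGradientAt g g' x) :
    HasGradientAt (fun y => f y - g y) (f' - g') x := by
  rw [hasGradientAt_iff_hasFDerivAt] at *
  simpa [map_sub] using hf.fun_sub hg

lemma coco {h : E → ℝ} {G : E → E} {K : ℝ} (hK : 0 < K)
    (hconv : ConvexOn ℝ univ h)
    (hG : ∀ x, HasGradientAt h (G x) x)
    (hlipG : ∀ x y, ‖G x - G y‖ ≤ K * ‖x - y‖) (x y : E) :
    K⁻¹ * ‖G x - G y‖ ^ 2 ≤ ⟪G x - G y, x - y⟫ := by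
  have key : ∀ a b : E, h a + ⟪G a, b - a⟫ + 1 / (2 * K) * ‖G b - G a‖ ^ 2 ≤ h b := by
    intro a b
    set φ : E → ℝ := fun w => h w - ⟪G a, w⟫ with hφdef
    have hGφ : ∀ w, HasGradientAt φ (G w - G a) w := fun w =>
      (hG w).sub' (hasGradientAt_inner_const (G a) w)
    have hlipφ : ∀ u v, ‖(G u - G a) - (G v - G a)‖ ≤ K * ‖u - v‖ := by
      intro u v
      have : (G u - G a) - (G v - G a) = G u - G v := by abel
      rw [this]; exact hlipG u v
    have hminφ : ∀ w, φ a ≤ φ w := by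
      intro w
      have h1 := convex_grad_ineq hconv (hG a) w
      have h2 : ⟪G a, w - a⟫ = ⟪G a, w⟫ - ⟪G a, a⟫ := by rw [inner_sub_right]
      simp only [hφdef]
      linarith
    set z := b - K⁻¹ • (G b - G a) with hzdef
    have hdesc := descent_lemma hK (G := fun w => G w - G a) hGφ hlipφ b z
    have hz : z - b = -(K⁻¹ • (G b - G a)) := by rw [hzdef]; abel
    have hinner : ⟪G b - G a, z - b⟫ = -(K⁻¹ * ‖G b - G a‖ ^ 2) := by
      rw [hz, inner_neg_right, real_inner_smul_right, real_inner_self_eq_norm_sq]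
    have hnorm : ‖z - b‖ ^ 2 = K⁻¹ ^ 2 * ‖G b - G a‖ ^ 2 := by
      rw [hz, norm_neg, norm_smul, Real.norm_eq_abs, abs_of_nonneg (by positivity)]
      ring
    have hchain : φ a ≤ φ b - 1 / (2 * K) * ‖G b - G a‖ ^ 2 := by
      have := hminφ z
      rw [hinner, hnorm] at hdesc
      have harith : ⟪G b - G a, b⟫ + (-(K⁻¹ * ‖G b - G a‖ ^ 2)
          + K / 2 * (K⁻¹ ^ 2 * ‖G b - G a‖ ^ 2))
          = ⟪G b - G a, b⟫ - 1 / (2 * K) * ‖G b - G a‖ ^ 2 := by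
        field_simp
        ring
      calc φ a ≤ φ z := hminφ z
        _ ≤ φ b - 1 / (2 * K) * ‖G b - G a‖ ^ 2 := by linarith [hdesc]
    have h2 : ⟪G a, b - a⟫ = ⟪G a, b⟫ - ⟪G a, a⟫ := by rw [inner_sub_right]
    simp only [hφdef] at hchain
    linarith
  have h1 := key x y
  have h2 := key y x
  have e1 : ‖G x - G y‖ = ‖G y - G x‖ := norm_sub_rev _ _
  have e2 : ⟪G x, y - x⟫ = ⟪G x, y⟫ - ⟪G x, x⟫ := inner_sub_right _ _ _
  have e3 : ⟪G y, x - y⟫ = ⟪G y, x⟫ - ⟪G y, y⟫ := inner_sub_right _ _ _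
  have e4 : ⟪G x - G y, x - y⟫ = ⟪G x, x⟫ - ⟪G x, y⟫ - ⟪G y, x⟫ + ⟪G y, y⟫ := by
    rw [inner_sub_left, inner_sub_right, inner_sub_right]; ring
  have e5 : 1 / (2 * K) + 1 / (2 * K) = K⁻¹ := by
    rw [← add_div, inv_eq_one_div]
    rw [div_eq_div_iff (by positivity) (by positivity)]
    ring
  rw [← e1] at h1
  rw [e2] at h1
  rw [e3] at h2
  rw [e4]
  nlinarith [h1, h2]

section MatrixPart

variable {N : ℕ} {Z : Matrix (Fin N) (Fin N) ℝ}

lemma toEuclideanLin_eigen (hH : Z.IsHermitian) (i : Fin N) :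
    Matrix.toEuclideanLin Z (hH.eigenvectorBasis i) =
      hH.eigenvalues i • hH.eigenvectorBasis i := by
  have h1 := hH.mulVec_eigenvectorBasis i
  ext j
  have := congrFun h1 j
  simpa [Matrix.toEuclideanLin_apply] using this

lemma repr_toEuclideanLin (hH : Z.IsHermitian) (u : EuclideanSpace ℝ (Fin N)) (i : Fin N) :
    hH.eigenvectorBasis.repr (Matrix.toEuclideanLin Z u) i
      = hH.eigenvalues i * hH.eigenvectorBasis.repr u i := by
  have hsym : (Matrix.toEuclideanLin Z).IsSymmetric :=
    Matrix.isHermitian_iff_isSymmetric.1 hH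
  rw [OrthonormalBasis.repr_apply_apply, OrthonormalBasis.repr_apply_apply,
    ← hsym (hH.eigenvectorBasis i) u, toEuclideanLin_eigen hH i, real_inner_smul_left]

lemma inner_repr (hH : Z.IsHermitian) (u v : EuclideanSpace ℝ (Fin N)) :
    ⟪u, v⟫ = ∑ i, hH.eigenvectorBasis.repr u i * hH.eigenvectorBasis.repr v i := by
  rw [← hH.eigenvectorBasis.repr.inner_map_map u v]
  simp only [PiLp.inner_apply, RCLike.inner_apply, conj_trivial]
  exact Finset.sum_congr rfl fun _ _ => mul_comm _ _

lemma norm_sq_repr (hH : Z.IsHermitian) (u : EuclideanSpace ℝ (Fin N)) :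
    ‖u‖ ^ 2 = ∑ i, (hH.eigenvectorBasis.repr u i) ^ 2 := by
  rw [← real_inner_self_eq_norm_sq, inner_repr hH]
  simp [sq]

lemma quad_lower_bound (hZ : Z.PosSemidef) {σ : ℝ}
    (hσmin : ∀ c ∈ spectrum ℝ Z, 0 < c → σ ≤ c)
    (v : EuclideanSpace ℝ (Fin N)) (hv : v ∈ LinearMap.range (Matrix.toEuclideanLin Z)) :
    σ * ‖v‖ ^ 2 ≤ ⟪v, Matrix.toEuclideanLin Z v⟫ := by
  obtain ⟨w, rfl⟩ := hv
  set hH := hZ.isHermitian with hHdef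
  set b := hH.eigenvectorBasis with hbdef
  rw [inner_repr hH, norm_sq_repr hH, Finset.mul_sum]
  apply Finset.sum_le_sum
  intro i _
  set c := b.repr (Matrix.toEuclideanLin Z w) i with hcdef
  have e2 : b.repr (Matrix.toEuclideanLin Z (Matrix.toEuclideanLin Z w)) i
      = hH.eigenvalues i * c := repr_toEuclideanLin hH _ i
  rw [e2]
  rcases eq_or_lt_of_le (hZ.eigenvalues_nonneg i) with h0 | hpos
  · have hc0 : c = 0 := by
      rw [hcdef, repr_toEuclideanLin hH, ← h0, zero_mul]
    rw [hc0]
    simp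
  · have hσle : σ ≤ hH.eigenvalues i := hσmin _ (hH.eigenvalues_mem_spectrum_real i) hpos
    nlinarith [sq_nonneg c]

lemma opnorm_bound (hZ : Z.PosSemidef) {ρ : ℝ} (hρ0 : 0 ≤ ρ)
    (hρmax : ∀ c ∈ spectrum ℝ Z, c ≤ ρ)
    (w : EuclideanSpace ℝ (Fin N)) :
    ‖Matrix.toEuclideanLin Z w‖ ≤ ρ * ‖w‖ := by
  set hH := hZ.isHermitian with hHdef
  have hsq : ‖Matrix.toEuclideanLin Z w‖ ^ 2 ≤ (ρ * ‖w‖) ^ 2 := by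
    rw [norm_sq_repr hH, mul_pow, norm_sq_repr hH w, Finset.mul_sum]
    apply Finset.sum_le_sum
    intro i _
    rw [repr_toEuclideanLin hH]
    have h1 : 0 ≤ hH.eigenvalues i := hZ.eigenvalues_nonneg i
    have h2 : hH.eigenvalues i ≤ ρ := hρmax _ (hH.eigenvalues_mem_spectrum_real i)
    nlinarith [sq_nonneg (hH.eigenvectorBasis.repr w i),
      mul_self_le_mul_self h1 h2]
  have h3 : 0 ≤ ρ * ‖w‖ := by positivity
  have h4 := Real.sqrt_le_sqrt hsq
  rwa [Real.sqrt_sq (norm_nonneg _), Real.sqrt_sq h3] at h4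

end MatrixPart

lemma convexOn_quadratic (T : E →ₗ[ℝ] E) (hTsym : T.IsSymmetric)
    (hT : ∀ v, 0 ≤ ⟪v, T v⟫) (c : ℝ) (hc : 0 ≤ c) :
    ConvexOn ℝ univ fun x => c * ⟪x, T x⟫ := by
  refine ⟨convex_univ, ?_⟩
  intro x _ y _ a b ha hb hab
  simp only [smul_eq_mul]
  have hexp : ⟪a • x + b • y, T (a • x + b • y)⟫
      = a ^ 2 * ⟪x, T x⟫ + 2 * (a * b) * ⟪x, T y⟫ + b ^ 2 * ⟪y, T y⟫ := by
    have hyx : ⟪y, T x⟫ = ⟪x, T y⟫ := by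
      rw [← hTsym y x, real_inner_comm]
    simp only [map_add, LinearMap.map_smul, inner_add_left, inner_add_right,
      real_inner_smul_left, real_inner_smul_right, hyx]
    ring
  have hpos : 0 ≤ ⟪x - y, T (x - y)⟫ := hT (x - y)
  have hexp2 : ⟪x - y, T (x - y)⟫ = ⟪x, T x⟫ - 2 * ⟪x, T y⟫ + ⟪y, T y⟫ := by
    have hyx : ⟪y, T x⟫ = ⟪x, T y⟫ := by
      rw [← hTsym y x, real_inner_comm]
    simp only [map_sub, inner_sub_left, inner_sub_right, hyx]
    ring
  rw [hexp2] at hpos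
  rw [hexp]
  have hb' : b = 1 - a := by linarith
  subst hb'
  nlinarith [mul_nonneg (mul_nonneg hc (mul_nonneg ha hb)) hpos]


/-- If `λ₁ − λ₂` lies in the column space of `Z` then `‖∇g(λ₁) − ∇g(λ₂)‖ ≥ (σ/𝓛) ‖λ₁ − λ₂‖`, where `𝓛 = L + ρα` and `∇g(λ) = Z^{1/2} x*(λ)`. -/
theorem dual_gradient_lower_bound
    (N : ℕ) (hN : 0 < N)
    (f : EuclideanSpace ℝ (Fin N) → ℝ) (μ L : ℝ) (hμ : 0 < μ) (hL : 0 < L)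
    (hf : ContDiff ℝ 2 f)
    (hsc : StrongConvexOn Set.univ μ f)
    (hlip : LipschitzWith L.toNNReal (gradient f))
    (Z : Matrix (Fin N) (Fin N) ℝ) (hZ : Z.PosSemidef) (hZ0 : Z ≠ 0)
    (ρ σ : ℝ)
    (hρ : ρ ∈ spectrum ℝ Z) (hρmax : ∀ c ∈ spectrum ℝ Z, c ≤ ρ)
    (hσ : σ ∈ spectrum ℝ Z) (hσpos : 0 < σ) (hσmin : ∀ c ∈ spectrum ℝ Z, 0 < c → σ ≤ c)
    (α : ℝ) (hα : 0 < α)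
    (xstar : EuclideanSpace ℝ (Fin N) → EuclideanSpace ℝ (Fin N))
    (hxstar : ∀ lam, IsMinOn (fun x => augLag N f α Z hZ x lam) Set.univ (xstar lam))
    :
    ∀ lam₁ lam₂ : EuclideanSpace ℝ (Fin N),
      lam₁ - lam₂ ∈ LinearMap.range (Matrix.toEuclideanLin Z) →
      σ / (L + ρ * α) * ‖lam₁ - lam₂‖ ≤
        ‖Matrix.toEuclideanLin hZ.sqrt (xstar lam₁) -
          Matrix.toEuclideanLin hZ.sqrt (xstar lam₂)‖ := by
  intro lam₁ lam₂ hmem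
  classical
  set A : EuclideanSpace ℝ (Fin N) →ₗ[ℝ] EuclideanSpace ℝ (Fin N) :=
    Matrix.toEuclideanLin hZ.sqrt with hAdef
  set Zl : EuclideanSpace ℝ (Fin N) →ₗ[ℝ] EuclideanSpace ℝ (Fin N) :=
    Matrix.toEuclideanLin Z with hZldef
  have hAsym : A.IsSymmetric := Matrix.isHermitian_iff_isSymmetric.1 (sqrtPSD_isHermitian hZ)
  have hZsym : Zl.IsSymmetric := Matrix.isHermitian_iff_isSymmetric.1 hZ.1
  have hAA : ∀ v, A (A v) = Zl v := by
    intro v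
    show Matrix.toEuclideanLin hZ.sqrt (Matrix.toEuclideanLin hZ.sqrt v)
      = Matrix.toEuclideanLin Z v
    simp only [Matrix.toEuclideanLin_apply]
    rw [Matrix.mulVec_mulVec, sqrtPSD_mul_self hZ]
  have hquad : ∀ uu vv : EuclideanSpace ℝ (Fin N), ⟪uu, Zl vv⟫ = ⟪A uu, A vv⟫ := by
    intro uu vv
    rw [hAsym uu (A vv), hAA]
  have hquadpos : ∀ v : EuclideanSpace ℝ (Fin N), 0 ≤ ⟪v, Zl v⟫ := by
    intro v
    rw [hquad v v, real_inner_self_eq_norm_sq]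
    positivity
  set K := L + ρ * α with hKdef
  have hρpos : 0 < ρ := lt_of_lt_of_le hσpos (hρmax σ hσ)
  have hKpos : 0 < K := add_pos hL (mul_pos hρpos hα)
  set h : EuclideanSpace ℝ (Fin N) → ℝ := fun x => f x + α / 2 * ⟪x, Zl x⟫ with hhdef
  set G : EuclideanSpace ℝ (Fin N) → EuclideanSpace ℝ (Fin N) := fun x => gradient f x + α • Zl x with hGdef
  have hfd : Differentiable ℝ f := hf.differentiable (by norm_num)
  have hGx : ∀ x, HasGradientAt h (G x) x := by
    intro x
    have h1 : HasGradientAt f (gradient f x) x := (hfd x).hasGradientAt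
    have h2 := hasGradientAt_quadratic Zl hZsym (α / 2) x
    have e : (2 * (α / 2)) = α := by ring
    rw [e] at h2
    exact h1.add' h2
  have hflip : ∀ x y : EuclideanSpace ℝ (Fin N), ‖gradient f x - gradient f y‖ ≤ L * ‖x - y‖ := by
    intro x y
    have := hlip.dist_le_mul x y
    rwa [dist_eq_norm, dist_eq_norm, Real.coe_toNNReal _ hL.le] at this
  have hGlip : ∀ x y : EuclideanSpace ℝ (Fin N), ‖G x - G y‖ ≤ K * ‖x - y‖ := by
    intro x y
    have e : G x - G y = (gradient f x - gradient f y) + α • Zl (x - y) := by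
      simp only [hGdef]
      rw [map_sub, smul_sub]
      abel
    rw [e]
    calc ‖(gradient f x - gradient f y) + α • Zl (x - y)‖
        ≤ ‖gradient f x - gradient f y‖ + ‖α • Zl (x - y)‖ := norm_add_le _ _
      _ ≤ L * ‖x - y‖ + α * (ρ * ‖x - y‖) := by
          apply add_le_add (hflip x y)
          rw [norm_smul, Real.norm_eq_abs, abs_of_nonneg hα.le]
          exact mul_le_mul_of_nonneg_left (opnorm_bound hZ hρpos.le hρmax (x - y)) hα.le
      _ = K * ‖x - y‖ := by rw [hKdef]; ring
  have hfconv : ConvexOn ℝ univ f := strongConvexOn_zero.mp (hsc.mono hμ.le)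
  have hqconv : ConvexOn ℝ univ fun x : EuclideanSpace ℝ (Fin N) => α / 2 * ⟪x, Zl x⟫ :=
    convexOn_quadratic Zl hZsym hquadpos (α / 2) (by positivity)
  have hhconv : ConvexOn ℝ univ h := hfconv.add hqconv
  have hopt : ∀ lam, G (xstar lam) + A lam = 0 := by
    intro lam
    have hinner : HasGradientAt (fun x : EuclideanSpace ℝ (Fin N) => ⟪lam, A x⟫) (A lam) (xstar lam) := by
      apply (hasGradientAt_inner_const (A lam) (xstar lam)).congr_of_eventuallyEq
      filter_upwards with x
      rw [← hAsym lam x]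
    have h2 := hasGradientAt_quadratic Zl hZsym (α / 2) (xstar lam)
    have e : (2 * (α / 2)) = α := by ring
    rw [e] at h2
    have hGa : HasGradientAt (fun x => augLag N f α Z hZ x lam)
        (gradient f (xstar lam) + A lam + α • Zl (xstar lam)) (xstar lam) := by
      have := (((hfd (xstar lam)).hasGradientAt).add' hinner).add' h2
      simpa [augLag] using this
    have hloc : IsLocalMin (fun x => augLag N f α Z hZ x lam) (xstar lam) :=
      (hxstar lam).filter_mono (Filter.le_principal_iff.2 Filter.univ_mem)
    have h0 := hloc.hasFDerivAt_eq_zero (hasGradientAt_iff_hasFDerivAt.1 hGa)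
    have h1 : gradient f (xstar lam) + A lam + α • Zl (xstar lam) = 0 := by
      apply (toDual ℝ (EuclideanSpace ℝ (Fin N))).injective
      rw [h0, map_zero]
    rw [hGdef]
    calc gradient f (xstar lam) + α • Zl (xstar lam) + A lam
        = gradient f (xstar lam) + A lam + α • Zl (xstar lam) := by abel
      _ = 0 := h1
  have hco := coco hKpos hhconv hGx hGlip (xstar lam₁) (xstar lam₂)
  have e1 : G (xstar lam₁) = -(A lam₁) := eq_neg_of_add_eq_zero_left (hopt lam₁)
  have e2 : G (xstar lam₂) = -(A lam₂) := eq_neg_of_add_eq_zero_left (hopt lam₂)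
  have hGdiff : G (xstar lam₁) - G (xstar lam₂) = -(A (lam₁ - lam₂)) := by
    rw [e1, e2, map_sub]
    abel
  rw [hGdiff, norm_neg, inner_neg_left] at hco
  set u : EuclideanSpace ℝ (Fin N) := lam₁ - lam₂ with hudef
  set D := ‖A (xstar lam₁) - A (xstar lam₂)‖ with hDdef
  have hAu : ⟪A u, xstar lam₁ - xstar lam₂⟫ = ⟪u, A (xstar lam₁) - A (xstar lam₂)⟫ := by
    rw [hAsym u, map_sub]
  rw [hAu] at hco
  have hcs : -⟪u, A (xstar lam₁) - A (xstar lam₂)⟫ ≤ ‖u‖ * D := by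
    have h1 := abs_real_inner_le_norm u (A (xstar lam₁) - A (xstar lam₂))
    have h2 := neg_abs_le ⟪u, A (xstar lam₁) - A (xstar lam₂)⟫
    rw [hDdef]
    linarith
  have hlow : σ * ‖u‖ ^ 2 ≤ ‖A u‖ ^ 2 := by
    have h1 := quad_lower_bound hZ hσmin u hmem
    rwa [hquad u u, real_inner_self_eq_norm_sq] at h1
  have hchain : σ / K * ‖u‖ ^ 2 ≤ ‖u‖ * D := by
    calc σ / K * ‖u‖ ^ 2 = K⁻¹ * (σ * ‖u‖ ^ 2) := by rw [div_eq_mul_inv]; ring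
      _ ≤ K⁻¹ * ‖A u‖ ^ 2 := by
          apply mul_le_mul_of_nonneg_left hlow (by positivity)
      _ ≤ -⟪u, A (xstar lam₁) - A (xstar lam₂)⟫ := hco
      _ ≤ ‖u‖ * D := hcs
  show σ / K * ‖u‖ ≤ D
  by_cases hu : u = 0
  · rw [hu, norm_zero, mul_zero]
    rw [hDdef]
    positivity
  · have hupos : 0 < ‖u‖ := norm_pos_iff.2 hu
    nlinarith [hchain, hupos]

end
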